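/- arXiv:2109.01324 — 2 statements merged into one kernel-verified Lean document; each statement's English description precedes it below -/
import Mathlib

section
/- Let Γ be a strongly-connected weighted digraph on n vertices with stationary distribution π and hitting time H for the random walk with transition matrix P = D⁻¹A. Then Kemeny's constant κ = Σ_v H(u,v)·π_v satisfies κ ≥ (n−1)/2, with equality if and only if Γ is a directed cycle (every vertex has exactly one out-edge, arranged in a single directed cycle through all n vertices). -/
open scoped Classical
open Finset Matrix

namespace Paper

variable {V : Type*} [Fintype V] [DecidableEq V]

/-- Out-degree of `u` in the weighted digraph with weight function `ω`. -/
noncomputable def deg (ω : V → V → ℝ) (u : V) : ℝ := ∑ v, ω u v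

/-- A weighted digraph is strongly connected if every vertex can reach every other
vertex along edges of positive weight. -/
def StronglyConnected (ω : V → V → ℝ) : Prop :=
  ∀ u v : V, Relation.ReflTransGen (fun a b => 0 < ω a b) u v

/-- The combinatorial Laplacian `L = D - A` of a weighted digraph. -/
noncomputable def lap (ω : V → V → ℝ) : Matrix V V ℝ :=
  Matrix.of fun u v => (if u = v then deg ω u else 0) - ω u v

/-- The transition probability matrix `P = D⁻¹ A` of the random walk. -/
noncomputable def trans (ω : V → V → ℝ) : Matrix V V ℝ :=
  Matrix.of fun u v => ω u v / deg ω u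

/-- `G` is the Moore–Penrose pseudoinverse of `M` (four Penrose conditions). -/
def IsMoorePenrose (M G : Matrix V V ℝ) : Prop :=
  M * G * M = M ∧ G * M * G = G ∧ (M * G)ᵀ = M * G ∧ (G * M)ᵀ = G * M

/-- `v` reaches `r` under iteration of the parent function `f`. -/
def Reaches (f : V → V) (v r : V) : Prop := ∃ k : ℕ, f^[k] v = r

/-- `f` encodes a spanning in-tree of the weighted digraph `ω` rooted at `r`:
every non-root vertex has its unique out-edge `(v, f v)` an edge of the digraph,
the root is a fixed point, and every vertex reaches the root. -/
def IsInTree (ω : V → V → ℝ) (r : V) (f : V → V) : Prop :=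
  f r = r ∧ (∀ v, v ≠ r → 0 < ω v (f v)) ∧ ∀ v, Reaches f v r

/-- The weight of the spanning in-tree encoded by `f` with root `r`. -/
noncomputable def treeWeight (ω : V → V → ℝ) (r : V) (f : V → V) : ℝ :=
  ∏ v ∈ Finset.univ.erase r, ω v (f v)

/-- `τ_r`: total weight of spanning in-trees rooted at `r`. -/
noncomputable def tau (ω : V → V → ℝ) (r : V) : ℝ :=
  ∑ f ∈ Finset.univ.filter (fun f : V → V => IsInTree ω r f), treeWeight ω r f

/-- `f` encodes a rooted spanning 2-forest with (distinct) roots `r₁`, `r₂`. -/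
def IsForest2 (ω : V → V → ℝ) (r₁ r₂ : V) (f : V → V) : Prop :=
  r₁ ≠ r₂ ∧ f r₁ = r₁ ∧ f r₂ = r₂ ∧ (∀ v, v ≠ r₁ → v ≠ r₂ → 0 < ω v (f v)) ∧
    ∀ v, Reaches f v r₁ ∨ Reaches f v r₂

/-- The weight of the rooted spanning 2-forest encoded by `f` with roots `r₁`, `r₂`. -/
noncomputable def forestWeight (ω : V → V → ℝ) (r₁ r₂ : V) (f : V → V) : ℝ :=
  ∏ v ∈ (Finset.univ.erase r₁).erase r₂, ω v (f v)

/-- The component of the root `b`: vertices reaching `b` under `f`. -/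
noncomputable def comp (f : V → V) (b : V) : Finset V :=
  Finset.univ.filter (fun z => Reaches f z b)

/-! ### Undirected weighted graphs, edges as unordered pairs -/

/-- Weighted degree in an undirected weighted graph given by `ωs : Sym2 V → ℝ`. -/
noncomputable def degS (ωs : Sym2 V → ℝ) (u : V) : ℝ := ∑ v, ωs s(u, v)

/-- The volume of an undirected weighted graph. -/
noncomputable def volS (ωs : Sym2 V → ℝ) : ℝ := ∑ u, degS ωs u

/-- Connectivity of an undirected weighted graph. -/
def ConnectedW (ωs : Sym2 V → ℝ) : Prop :=
  ∀ u v : V, Relation.ReflTransGen (fun a b => 0 < ωs s(a, b)) u v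

/-- An edge set `E` is a spanning tree of the weighted undirected graph `ωs`. -/
def IsWTree (ωs : Sym2 V → ℝ) (E : Finset (Sym2 V)) : Prop :=
  (∀ e ∈ E, 0 < ωs e) ∧ (SimpleGraph.fromEdgeSet (E : Set (Sym2 V))).IsAcyclic ∧
    (SimpleGraph.fromEdgeSet (E : Set (Sym2 V))).Connected

/-- An edge set `E` is a spanning 2-forest of the weighted undirected graph `ωs`
(acyclic, with exactly two connected components). -/
def IsWTwoForest (ωs : Sym2 V → ℝ) (E : Finset (Sym2 V)) : Prop :=
  (∀ e ∈ E, 0 < ωs e) ∧ (SimpleGraph.fromEdgeSet (E : Set (Sym2 V))).IsAcyclic ∧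
    Nat.card (SimpleGraph.fromEdgeSet (E : Set (Sym2 V))).ConnectedComponent = 2

/-- The weight of a subgraph given by an edge set. -/
noncomputable def wgt (ωs : Sym2 V → ℝ) (E : Finset (Sym2 V)) : ℝ := ∏ e ∈ E, ωs e

/-- Total weight of spanning trees of the weighted undirected graph `ωs`. -/
noncomputable def tauW (ωs : Sym2 V → ℝ) : ℝ :=
  ∑ E ∈ Finset.univ.filter (fun E : Finset (Sym2 V) => IsWTree ωs E), wgt ωs E

/-- The combinatorial Laplacian of a weighted undirected graph. -/
noncomputable def lapW (ωs : Sym2 V → ℝ) : Matrix V V ℝ :=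
  Matrix.of fun u v => (if u = v then degS ωs u else 0) - ωs s(u, v)

/-! ### Simple graphs -/

/-- An edge set `E` is a spanning tree of the simple graph `G`. -/
def IsSTree (G : SimpleGraph V) (E : Finset (Sym2 V)) : Prop :=
  (E : Set (Sym2 V)) ⊆ G.edgeSet ∧ (SimpleGraph.fromEdgeSet (E : Set (Sym2 V))).IsAcyclic ∧
    (SimpleGraph.fromEdgeSet (E : Set (Sym2 V))).Connected

/-- An edge set `E` is a spanning 2-forest of the simple graph `G`. -/
def IsSTwoForest (G : SimpleGraph V) (E : Finset (Sym2 V)) : Prop :=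
  (E : Set (Sym2 V)) ⊆ G.edgeSet ∧ (SimpleGraph.fromEdgeSet (E : Set (Sym2 V))).IsAcyclic ∧
    Nat.card (SimpleGraph.fromEdgeSet (E : Set (Sym2 V))).ConnectedComponent = 2

/-- The number of spanning trees of the simple graph `G`. -/
noncomputable def treeCount (G : SimpleGraph V) : ℕ :=
  (Finset.univ.filter (fun E : Finset (Sym2 V) => IsSTree G E)).card

/-!
Work with the transition matrix `P = D⁻¹A`, an irreducible row-stochastic matrix. By Kac's
formula, `π u` times the mean return time to `u` is `1`. The function `w ↦ H w v - H w u` is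
superharmonic off `v`, so by the minimum principle it is smallest at `v`; evaluating one step
from `u` gives the commute-time bound `1 ≤ π u * (H u v + H v u)`. Kemeny's vector
`u ↦ ∑ v, H u v * π v` is harmonic, hence constant, and averaging it against `π` gives
`2κ = ∑_{a ≠ b} π a π b (H a b + H b a) ≥ ∑_{a ≠ b} π b = n - 1`.

In the equality case every commute-time bound is tight, which leaves each vertex a single
out-neighbour; strong connectivity then makes the successor map a cyclic permutation.
Conversely, on a directed cycle `π` is uniform and `H u (σ^k u) = k` for `k < n`.
-/

end Paper

-- Reopen the namespace to drop the `[DecidableEq V]` section variable: decidability is classical.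
namespace Paper

variable {V : Type*} [Fintype V]

structure IsHittingTime (P : Matrix V V ℝ) (H : V → V → ℝ) : Prop where
  self_eq_zero : ∀ v, H v v = 0
  eq_one_add : ∀ u v, u ≠ v → H u v = 1 + ∑ w, P u w * H w v

structure IsStationaryDist (P : Matrix V V ℝ) (π : V → ℝ) : Prop where
  pos : ∀ v, 0 < π v
  sum_eq_one : ∑ v, π v = 1
  sum_mul_eq : ∀ v, ∑ u, π u * P u v = π v

def returnTime (P : Matrix V V ℝ) (H : V → V → ℝ) (v : V) : ℝ := 1 + ∑ w, P v w * H w v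

def kemeny (H : V → V → ℝ) (π : V → ℝ) (u : V) : ℝ := ∑ v, H u v * π v

lemma sum_mul_sub (P : Matrix V V ℝ) (f g : V → ℝ) (u : V) :
    ∑ w, P u w * (f w - g w) = ∑ w, P u w * f w - ∑ w, P u w * g w := by
  simp only [mul_sub, sum_sub_distrib]

lemma sum_sum_erase_eq {π : V → ℝ} (hπsum : ∑ v, π v = 1) :
    ∑ a, ∑ b ∈ univ.erase a, π b = (Fintype.card V : ℝ) - 1 := by
  simp only [sum_erase_eq_sub (mem_univ _), hπsum, sum_sub_distrib, sum_const, card_univ,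
    nsmul_eq_mul, mul_one]

lemma sum_range_natCast (n : ℕ) : ∑ k ∈ range n, (k : ℝ) = n * (n - 1) / 2 := by
  induction n with
  | zero => simp
  | succ n ih =>
    rw [sum_range_succ, ih]
    push_cast
    ring

lemma exists_pos_of_mem_rowStochastic {P : Matrix V V ℝ} (hP : P ∈ rowStochastic ℝ V)
    (a : V) : ∃ w, 0 < P a w := by
  obtain ⟨w, -, hw⟩ := exists_lt_of_sum_lt (s := univ) (f := fun _ => (0 : ℝ)) (g := P a)
    (by simp [sum_row_of_mem_rowStochastic hP])
  exact ⟨w, hw⟩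

lemma eq_ite_of_pos_iff {P : Matrix V V ℝ} (hP : P ∈ rowStochastic ℝ V) {σ : V → V}
    (hσ : ∀ a b, 0 < P a b ↔ b = σ a) (a b : V) : P a b = if b = σ a then 1 else 0 := by
  have hzero : ∀ w, w ≠ σ a → P a w = 0 := fun w hw =>
    le_antisymm (not_lt.1 (mt (hσ a w).1 hw)) (nonneg_of_mem_rowStochastic hP)
  split_ifs with hb
  · rw [hb, ← sum_row_of_mem_rowStochastic hP a,
      sum_eq_single (σ a) (fun w _ hw => hzero w hw) (fun h => absurd (mem_univ _) h)]
  · exact hzero b hb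

section MinimumPrinciple

variable {P : Matrix V V ℝ} {g : V → ℝ}

lemma le_sum_mul_of_forall_le (hP : P ∈ rowStochastic ℝ V) {m : ℝ} (hm : ∀ w, m ≤ g w)
    (a : V) : m ≤ ∑ w, P a w * g w :=
  calc m = ∑ w, P a w * m := by rw [← sum_mul, sum_row_of_mem_rowStochastic hP, one_mul]
    _ ≤ ∑ w, P a w * g w :=
      sum_le_sum fun w _ => mul_le_mul_of_nonneg_left (hm w) (nonneg_of_mem_rowStochastic hP)

lemma eq_of_sum_mul_le (hP : P ∈ rowStochastic ℝ V) {m : ℝ} (hm : ∀ w, m ≤ g w) {a c : V}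
    (hsum : ∑ w, P a w * g w ≤ m) (hac : 0 < P a c) : g c = m := by
  have hterm : ∀ w ∈ univ, 0 ≤ P a w * (g w - m) := fun w _ =>
    mul_nonneg (nonneg_of_mem_rowStochastic hP) (sub_nonneg.2 (hm w))
  have hzero : ∑ w, P a w * (g w - m) = 0 := by
    rw [sum_mul_sub P g (fun _ => m), ← sum_mul, sum_row_of_mem_rowStochastic hP, one_mul]
    linarith [le_sum_mul_of_forall_le hP hm a]
  have hc := (sum_eq_zero_iff_of_nonneg hterm).1 hzero c (mem_univ c)
  linarith [(mul_eq_zero.1 hc).resolve_left hac.ne']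

lemma minimum_principle (hP : P ∈ rowStochastic ℝ V) (hirr : StronglyConnected P) {t : V}
    (hsup : ∀ z, z ≠ t → ∑ w, P z w * g w ≤ g z) (w : V) : g t ≤ g w := by
  obtain ⟨z₀, -, hz₀⟩ := exists_min_image univ g ⟨t, mem_univ t⟩
  have hmin : ∀ w, g z₀ ≤ g w := fun w => hz₀ w (mem_univ w)
  suffices ∀ z, Relation.ReflTransGen (fun a b => 0 < P a b) z t → g z = g z₀ →
      g t = g z₀ from this z₀ (hirr z₀ t) rfl ▸ hmin w
  intro z hzt
  induction hzt using Relation.ReflTransGen.head_induction_on with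
  | refl => exact id
  | @head a c hac _ ih =>
    intro ha
    by_cases hat : a = t
    · exact hat ▸ ha
    · exact ih (eq_of_sum_mul_le hP hmin (ha ▸ hsup a hat) hac)

lemma eq_of_harmonic (hP : P ∈ rowStochastic ℝ V) (hirr : StronglyConnected P)
    (hg : ∀ z, ∑ w, P z w * g w = g z) (u u' : V) : g u = g u' :=
  le_antisymm (minimum_principle hP hirr (fun z _ => (hg z).le) u')
    (minimum_principle hP hirr (fun z _ => (hg z).le) u)

end MinimumPrinciple

section Orbit

open Function

variable {f : V → V}

lemma sum_eq_sum_range_minimalPeriod {M : Type*} [AddCommMonoid M]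
    (hf : ∀ a b, ∃ k, f^[k] a = b) (g : V → M) (a : V) :
    ∑ v, g v = ∑ k ∈ range (minimalPeriod f a), g (f^[k] a) := by
  have hper : 0 < minimalPeriod f a := by
    obtain ⟨k, hk⟩ := hf (f a) a
    exact IsPeriodicPt.minimalPeriod_pos k.succ_pos
      (by rw [IsPeriodicPt, IsFixedPt, iterate_succ_apply, hk])
  refine (sum_nbij (f^[·] a) (fun _ _ => mem_univ _) ?_ ?_ fun _ _ => rfl).symm
  · rw [coe_range]
    exact iterate_injOn_Iio_minimalPeriod
  · intro b _
    obtain ⟨k, hk⟩ := hf a b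
    exact ⟨k % minimalPeriod f a, mem_range.2 (Nat.mod_lt k hper),
      by simp only [iterate_mod_minimalPeriod_eq, hk]⟩

lemma minimalPeriod_eq_card (hf : ∀ a b, ∃ k, f^[k] a = b) (a : V) :
    minimalPeriod f a = Fintype.card V := by
  have h := sum_eq_sum_range_minimalPeriod hf (fun _ => 1) a
  simp only [sum_const, card_range, card_univ, smul_eq_mul, mul_one] at h
  exact h.symm

lemma exists_perm_of_reflTransGen {r : V → V → Prop} (hf : ∀ a b, r a b ↔ b = f a)
    (hr : ∀ a b, Relation.ReflTransGen r a b) :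
    ∃ σ : Equiv.Perm V, ⇑σ = f ∧ ∀ a b, ∃ k : ℕ, (σ ^ k) a = b := by
  have hreach : ∀ a b, ∃ k, f^[k] a = b := by
    intro a b
    induction hr a b with
    | refl => exact ⟨0, rfl⟩
    | tail _ hbc ih =>
      obtain ⟨k, hk⟩ := ih
      exact ⟨k + 1, by rw [iterate_succ_apply', hk, ← (hf _ _).1 hbc]⟩
  have hsurj : Surjective f := fun b => by
    obtain ⟨k, hk⟩ := hreach (f b) b
    exact ⟨f^[k] b, by rw [← iterate_succ_apply' f, iterate_succ_apply, hk]⟩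
  refine ⟨Equiv.ofBijective f (Finite.surjective_iff_bijective.1 hsurj), rfl, fun a b => ?_⟩
  simpa only [Equiv.Perm.coe_pow, Equiv.coe_ofBijective] using hreach a b

end Orbit

namespace IsHittingTime

variable {P : Matrix V V ℝ} {H : V → V → ℝ} {π : V → ℝ}

lemma sum_mul_eq (hH : IsHittingTime P H) {u v : V} (huv : u ≠ v) :
    ∑ w, P u w * H w v = H u v - 1 := by
  linarith [hH.eq_one_add u v huv]

lemma add_ite_eq (hH : IsHittingTime P H) (u v : V) :
    H u v + (if u = v then returnTime P H v else 0) = 1 + ∑ w, P u w * H w v := by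
  by_cases huv : u = v
  · subst huv
    rw [hH.self_eq_zero, if_pos rfl, zero_add, returnTime]
  · rw [if_neg huv, add_zero, hH.eq_one_add u v huv]

/-- Kac's formula. -/
lemma mul_returnTime (hH : IsHittingTime P H) (hπ : IsStationaryDist P π) (v : V) :
    π v * returnTime P H v = 1 := by
  have key : ∑ u, π u * (H u v + if u = v then returnTime P H v else 0)
      = ∑ u, π u * (1 + ∑ w, P u w * H w v) := by
    simp only [hH.add_ite_eq]
  simp only [mul_add, sum_add_distrib, mul_ite, mul_zero, sum_ite_eq', mem_univ, if_true,
    mul_one, hπ.sum_eq_one, mul_sum] at key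
  rw [sum_comm] at key
  simp only [← mul_assoc, ← sum_mul, hπ.sum_mul_eq] at key
  linarith

lemma kemeny_harmonic (hH : IsHittingTime P H) (hπ : IsStationaryDist P π) (u : V) :
    ∑ w, P u w * kemeny H π w = kemeny H π u := by
  have key : ∑ v, (H u v + if u = v then returnTime P H v else 0) * π v
      = ∑ v, (1 + ∑ w, P u w * H w v) * π v := by
    simp only [hH.add_ite_eq]
  simp only [add_mul, sum_add_distrib, ite_mul, zero_mul, sum_ite_eq, mem_univ, if_true,
    one_mul, hπ.sum_eq_one, sum_mul] at key
  rw [mul_comm, hH.mul_returnTime hπ, sum_comm] at key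
  simp only [kemeny, mul_sum, ← mul_assoc]
  linarith

lemma returnTime_pos (hH : IsHittingTime P H) (hπ : IsStationaryDist P π) (v : V) :
    0 < returnTime P H v :=
  pos_of_mul_pos_right ((hH.mul_returnTime hπ v).symm ▸ one_pos) (hπ.pos v).le

lemma sum_mul_sub_eq (hH : IsHittingTime P H) {u v : V} (huv : u ≠ v) :
    ∑ w, P u w * (H w v - H w u) = H u v - returnTime P H u := by
  rw [sum_mul_sub, hH.sum_mul_eq huv, returnTime]
  ring

lemma apply_iterate_eq (hH : IsHittingTime P H) {σ : V → V}
    (hPσ : ∀ a b, P a b = if b = σ a then 1 else 0) (hσ : ∀ a b, ∃ k, σ^[k] a = b) :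
    ∀ k < Fintype.card V, ∀ a, H a (σ^[k] a) = k := by
  intro k
  induction k with
  | zero => exact fun _ a => by simpa using hH.self_eq_zero a
  | succ k ih =>
    intro hk a
    have hne : a ≠ σ^[k + 1] a := fun h => by
      have := (Function.iterate_eq_iterate_iff_of_lt_minimalPeriod (f := σ) (m := 0) (n := k + 1)
        (by rw [minimalPeriod_eq_card hσ]; omega) (by rw [minimalPeriod_eq_card hσ]; omega)).1 h
      omega
    rw [hH.eq_one_add a _ hne]
    simp only [hPσ, ite_mul, one_mul, zero_mul, sum_ite_eq', mem_univ, if_true]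
    rw [Function.iterate_succ_apply, ih (by omega)]
    push_cast
    ring

lemma kemeny_eq_of_perm (hH : IsHittingTime P H) (hπ : IsStationaryDist P π) (σ : Equiv.Perm V)
    (hPσ : ∀ a b, P a b = if b = σ a then 1 else 0) (hσ : ∀ a b, ∃ k : ℕ, (σ ^ k) a = b)
    (u : V) : kemeny H π u = ((Fintype.card V : ℝ) - 1) / 2 := by
  simp only [Equiv.Perm.coe_pow] at hσ
  have hπσ : ∀ a, π (σ a) = π a := fun a => by
    rw [← hπ.sum_mul_eq]
    simp only [hPσ, σ.injective.eq_iff, mul_ite, mul_one, mul_zero, sum_ite_eq, mem_univ, if_true]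
  have hπu : ∀ v, π v = π u := fun v => by
    obtain ⟨k, rfl⟩ := hσ u v
    induction k with
    | zero => rfl
    | succ k ih => rw [Function.iterate_succ_apply', hπσ, ih]
  have hcard : (Fintype.card V : ℝ) * π u = 1 := by
    rw [← hπ.sum_eq_one]
    simp [hπu]
  calc kemeny H π u = ∑ v, H u v * π u := sum_congr rfl fun v _ => by rw [hπu v]
    _ = π u * ∑ k ∈ range (Fintype.card V), H u (σ^[k] u) := by
        rw [← sum_mul, mul_comm, sum_eq_sum_range_minimalPeriod hσ (H u) u,
          minimalPeriod_eq_card hσ]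
    _ = π u * ∑ k ∈ range (Fintype.card V), (k : ℝ) := by
        rw [sum_congr rfl fun k hk => hH.apply_iterate_eq hPσ hσ k (mem_range.1 hk) u]
    _ = ((Fintype.card V : ℝ) - 1) / 2 := by
        rw [sum_range_natCast]
        linear_combination ((Fintype.card V : ℝ) - 1) / 2 * hcard

section Irreducible

variable (hP : P ∈ rowStochastic ℝ V) (hirr : StronglyConnected P)
  (hH : IsHittingTime P H) (hπ : IsStationaryDist P π)
include hP hirr hH hπ

/-- `w ↦ H w v - H w u` is superharmonic off `v`, hence minimal at `v`. -/
lemma neg_le_sub {u v : V} (huv : u ≠ v) (w : V) : -H v u ≤ H w v - H w u := by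
  have hmin := minimum_principle hP hirr (g := fun w => H w v - H w u) (t := v) ?_ w
  · simpa only [hH.self_eq_zero, zero_sub] using hmin
  intro z hzv
  rw [sum_mul_sub, hH.sum_mul_eq hzv]
  by_cases hzu : z = u
  · subst hzu
    have hR := hH.returnTime_pos hπ z
    rw [returnTime] at hR
    rw [hH.self_eq_zero]
    linarith
  · rw [hH.sum_mul_eq hzu]
    linarith

lemma one_le_mul_add {u v : V} (huv : u ≠ v) : 1 ≤ π u * (H u v + H v u) := by
  have hle := le_sum_mul_of_forall_le hP (hH.neg_le_sub hP hirr hπ huv) u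
  rw [hH.sum_mul_sub_eq huv] at hle
  rw [← hH.mul_returnTime hπ u]
  exact mul_le_mul_of_nonneg_left (by linarith) (hπ.pos u).le

lemma add_swap_pos {u v : V} (huv : u ≠ v) : 0 < H u v + H v u :=
  pos_of_mul_pos_right (one_pos.trans_le (hH.one_le_mul_add hP hirr hπ huv)) (hπ.pos u).le

lemma sub_eq_of_mul_add_eq_one {u v w : V} (huv : u ≠ v) (htight : π u * (H u v + H v u) = 1)
    (huw : 0 < P u w) : H w v - H w u = -H v u := by
  refine eq_of_sum_mul_le hP (hH.neg_le_sub hP hirr hπ huv) ?_ huw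
  have hR : returnTime P H u = H u v + H v u :=
    mul_left_cancel₀ (hπ.pos u).ne' ((hH.mul_returnTime hπ u).trans htight.symm)
  rw [hH.sum_mul_sub_eq huv, hR]
  linarith

/-- Two distinct out-neighbours `w₁`, `w₂` of `a` would force `H w₁ w₂ + H w₂ w₁ = 0`,
via `sub_eq_of_mul_add_eq_one` applied to the pairs `(a, w₁)` and `(a, w₂)`. -/
lemma eq_of_pos_of_pos (htight : ∀ a b, a ≠ b → π a * (H a b + H b a) = 1) {a w₁ w₂ : V}
    (h₁ : 0 < P a w₁) (h₂ : 0 < P a w₂) : w₁ = w₂ := by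
  by_contra hne
  wlog hw₂ : w₂ ≠ a generalizing w₁ w₂
  · exact this h₂ h₁ (Ne.symm hne) (fun h => hne ((not_not.1 hw₂).trans h.symm).symm)
  have e₁ := hH.sub_eq_of_mul_add_eq_one hP hirr hπ hw₂.symm (htight a w₂ hw₂.symm) h₁
  by_cases hw₁ : w₁ = a
  · subst hw₁
    rw [hH.self_eq_zero] at e₁
    linarith [hH.add_swap_pos hP hirr hπ hw₂.symm]
  · have e₂ :=
      hH.sub_eq_of_mul_add_eq_one hP hirr hπ (Ne.symm hw₁) (htight a w₁ (Ne.symm hw₁)) h₂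
    linarith [hH.add_swap_pos hP hirr hπ hne]

lemma kemeny_eq_kemeny (u u' : V) : kemeny H π u = kemeny H π u' :=
  eq_of_harmonic hP hirr (hH.kemeny_harmonic hπ) u u'

lemma two_mul_kemeny_eq (u : V) :
    2 * kemeny H π u = ∑ a, ∑ b ∈ univ.erase a, π a * π b * (H a b + H b a) := by
  have hmean : ∑ a, ∑ b, π a * π b * H a b = kemeny H π u := by
    calc ∑ a, ∑ b, π a * π b * H a b = ∑ a, π a * kemeny H π a := by
          simp only [kemeny, mul_sum]
          exact sum_congr rfl fun a _ => sum_congr rfl fun b _ => by ring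
      _ = kemeny H π u := by
          simp only [hH.kemeny_eq_kemeny hP hirr hπ _ u, ← sum_mul, hπ.sum_eq_one, one_mul]
  have hswap : ∑ a, ∑ b, π a * π b * H b a = ∑ a, ∑ b, π a * π b * H a b := by
    rw [sum_comm]
    simp only [mul_comm (π _) (π _)]
  calc 2 * kemeny H π u = ∑ a, ∑ b, π a * π b * (H a b + H b a) := by
        simp only [mul_add, sum_add_distrib, hswap, hmean]
        ring
    _ = _ := sum_congr rfl fun a _ =>
        (sum_erase _ (by rw [hH.self_eq_zero, add_zero, mul_zero])).symm

lemma le_mul_mul_add {a b : V} (hab : a ≠ b) : π b ≤ π a * π b * (H a b + H b a) := by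
  have := mul_le_mul_of_nonneg_left (hH.one_le_mul_add hP hirr hπ hab) (hπ.pos b).le
  linarith

lemma kemeny_lower_bound (u : V) : ((Fintype.card V : ℝ) - 1) / 2 ≤ kemeny H π u := by
  have hsum : ∑ a, ∑ b ∈ univ.erase a, π b ≤ 2 * kemeny H π u := by
    rw [hH.two_mul_kemeny_eq hP hirr hπ u]
    exact sum_le_sum fun a _ => sum_le_sum fun b hb =>
      hH.le_mul_mul_add hP hirr hπ (ne_of_mem_erase hb).symm
  rw [sum_sum_erase_eq hπ.sum_eq_one] at hsum
  linarith

lemma mul_add_eq_one_of_kemeny_eq {u : V} (hκ : kemeny H π u = ((Fintype.card V : ℝ) - 1) / 2)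
    {a b : V} (hab : a ≠ b) : π a * (H a b + H b a) = 1 := by
  have hle : ∀ a ∈ univ, ∀ b ∈ univ.erase a, π b ≤ π a * π b * (H a b + H b a) :=
    fun a _ b hb => hH.le_mul_mul_add hP hirr hπ (ne_of_mem_erase hb).symm
  have heq : ∑ a, ∑ b ∈ univ.erase a, π b =
      ∑ a, ∑ b ∈ univ.erase a, π a * π b * (H a b + H b a) := by
    rw [sum_sum_erase_eq hπ.sum_eq_one, ← hH.two_mul_kemeny_eq hP hirr hπ u, hκ]
    ring
  have hrow := (sum_eq_sum_iff_of_le fun a ha => sum_le_sum (hle a ha)).1 heq a (mem_univ a)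
  have hb := (sum_eq_sum_iff_of_le (hle a (mem_univ a))).1 hrow b
    (mem_erase.2 ⟨hab.symm, mem_univ b⟩)
  exact mul_left_cancel₀ (hπ.pos b).ne' (by linear_combination -hb)

lemma kemeny_eq_iff :
    (∀ u, kemeny H π u = ((Fintype.card V : ℝ) - 1) / 2) ↔
      ∃ σ : Equiv.Perm V,
        (∀ a b, 0 < P a b ↔ b = σ a) ∧ ∀ a b, ∃ k : ℕ, (σ ^ k) a = b := by
  constructor
  · intro hκ
    choose f hf using exists_pos_of_mem_rowStochastic hP
    have hfP : ∀ a b, 0 < P a b ↔ b = f a := fun a b =>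
      ⟨fun h => hH.eq_of_pos_of_pos hP hirr hπ
        (fun a b hab => hH.mul_add_eq_one_of_kemeny_eq hP hirr hπ (hκ a) hab) h (hf a),
       fun h => h ▸ hf a⟩
    obtain ⟨σ, rfl, hσ⟩ := exists_perm_of_reflTransGen hfP hirr
    exact ⟨σ, hfP, hσ⟩
  · rintro ⟨σ, hσP, hσ⟩ u
    exact hH.kemeny_eq_of_perm hπ σ (eq_ite_of_pos_iff hP hσP) hσ u

end Irreducible

end IsHittingTime

lemma deg_pos_of_stationary {ω : V → V → ℝ} (hnn : ∀ u v, 0 ≤ ω u v) {π : V → ℝ}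
    (hπpos : ∀ v, 0 < π v) (hπstat : ∀ v, ∑ u, π u * trans ω u v = π v) (u : V) :
    0 < deg ω u := by
  -- If `deg ω u = 0`, row `u` of `trans ω` is zero (division by zero), so mass `π u` is lost.
  have hrow : ∀ a, ∑ v, trans ω a v = deg ω a / deg ω a := fun a => by
    simp only [trans, of_apply, ← sum_div, deg]
  have hterm : ∀ a ∈ univ, 0 ≤ π a * (1 - deg ω a / deg ω a) := fun a _ =>
    mul_nonneg (hπpos a).le (sub_nonneg.2 (div_self_le_one _))
  have hzero : ∑ a, π a * (1 - deg ω a / deg ω a) = 0 := by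
    have : ∑ a, π a * (deg ω a / deg ω a) = ∑ v, π v := by
      simp only [← hrow, mul_sum]
      rw [sum_comm]
      exact sum_congr rfl fun v _ => hπstat v
    simp only [mul_sub, mul_one, sum_sub_distrib, this, sub_self]
  have hu := (sum_eq_zero_iff_of_nonneg hterm).1 hzero u (mem_univ u)
  have hdu : deg ω u / deg ω u = 1 := by
    linarith [(mul_eq_zero.1 hu).resolve_left (hπpos u).ne']
  refine (show 0 ≤ deg ω u from sum_nonneg fun v _ => hnn u v).lt_of_ne' fun h => ?_
  rw [h, div_zero] at hdu
  exact zero_ne_one hdu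

lemma trans_mem_rowStochastic {ω : V → V → ℝ} (hnn : ∀ u v, 0 ≤ ω u v)
    (hdeg : ∀ u, 0 < deg ω u) : trans ω ∈ rowStochastic ℝ V :=
  mem_rowStochastic_iff_sum.2 ⟨fun u v => div_nonneg (hnn u v) (hdeg u).le,
    fun u => by simp only [trans, of_apply, ← sum_div]; exact div_self (hdeg u).ne'⟩

theorem kemeny_constant_lower_bound_general
    {V : Type*} [Fintype V]
    (ω : V → V → ℝ) (hnn : ∀ u v, 0 ≤ ω u v)
    (hsc : StronglyConnected ω)
    (π : V → ℝ) (hπpos : ∀ v, 0 < π v) (hπsum : ∑ v, π v = 1)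
    (hπstat : ∀ v, ∑ u, π u * trans ω u v = π v)
    (H : V → V → ℝ) (hH0 : ∀ v, H v v = 0)
    (hHrec : ∀ u v, u ≠ v → H u v = 1 + ∑ w, (ω u w / deg ω u) * H w v) :
    (∀ u : V, ((Fintype.card V : ℝ) - 1) / 2 ≤ ∑ v, H u v * π v) ∧
      ((∀ u : V, ∑ v, H u v * π v = ((Fintype.card V : ℝ) - 1) / 2) ↔
        ∃ σ : Equiv.Perm V, (∀ a b : V, 0 < ω a b ↔ b = σ a) ∧
          ∀ a b : V, ∃ k : ℕ, (σ ^ k) a = b) := by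
  have hdeg := deg_pos_of_stationary hnn hπpos hπstat
  have hP := trans_mem_rowStochastic hnn hdeg
  have hpos : ∀ a b, 0 < trans ω a b ↔ 0 < ω a b := fun a b =>
    div_pos_iff_of_pos_right (hdeg a)
  have hirr : StronglyConnected (trans ω) := fun u v =>
    Relation.ReflTransGen.mono (fun a b => (hpos a b).2) u v (hsc u v)
  have hH : IsHittingTime (trans ω) H := ⟨hH0, hHrec⟩
  have hπ : IsStationaryDist (trans ω) π := ⟨hπpos, hπsum, hπstat⟩
  simp only [← hpos]
  exact ⟨hH.kemeny_lower_bound hP hirr hπ, hH.kemeny_eq_iff hP hirr hπ⟩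

/-- **Tight lower bound for Kemeny's constant.**
For a strongly-connected weighted digraph on `n` vertices, Kemeny's constant
`κ = Σ_v H(u,v)·π_v` is at least `(n-1)/2`, with equality if and only if `Γ` is a
directed cycle: there is a permutation `σ` forming a single cycle through all the
vertices such that the edges of `Γ` are exactly the pairs `(a, σ a)`. -/
theorem kemeny_constant_lower_bound
    {V : Type*} [Fintype V] [DecidableEq V]
    (ω : V → V → ℝ) (hnn : ∀ u v, 0 ≤ ω u v) (hloop : ∀ v, ω v v = 0)
    (hsc : StronglyConnected ω)
    (π : V → ℝ) (hπpos : ∀ v, 0 < π v) (hπsum : ∑ v, π v = 1)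
    (hπstat : ∀ v, ∑ u, π u * trans ω u v = π v)
    (H : V → V → ℝ) (hH0 : ∀ v, H v v = 0)
    (hHrec : ∀ u v, u ≠ v → H u v = 1 + ∑ w, (ω u w / deg ω u) * H w v) :
    (∀ u : V, ((Fintype.card V : ℝ) - 1) / 2 ≤ ∑ v, H u v * π v) ∧
      ((∀ u : V, ∑ v, H u v * π v = ((Fintype.card V : ℝ) - 1) / 2) ↔
        ∃ σ : Equiv.Perm V, (∀ a b : V, 0 < ω a b ↔ b = σ a) ∧
          ∀ a b : V, ∃ k : ℕ, (σ ^ k) a = b) :=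
  kemeny_constant_lower_bound_general ω hnn hsc π hπpos hπsum hπstat H hH0 hHrec

end Paper
end

section
/- Let Γ be a strongly-connected weighted digraph with stationary distribution π and hitting time H for the random walk with transition matrix P = D⁻¹A. (a) If e = (v,u) is an edge of Γ, then H(u,v) ≤ (d_v/ω(v,u))·(1/π_v − 1). (b) For distinct vertices u, v, let R be the set of vertices b such that there exists a directed path from u to b not passing through v; then H(u,v) ≤ max_{b ∈ R} d_b/ω(b,v) (interpreted as +∞ if ω(b,v) = 0 for some b ∈ R). -/
open scoped Classical
open Finset Matrix

namespace Paper

variable {V : Type*} [Fintype V] [DecidableEq V]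

private lemma deg_pos' {V : Type*} [Fintype V] [DecidableEq V]
    (ω : V → V → ℝ) (hnn : ∀ u v, 0 ≤ ω u v) (hsc : StronglyConnected ω)
    {x y : V} (hxy : x ≠ y) (w : V) : 0 < deg ω w := by
  obtain ⟨z, hz⟩ : ∃ z : V, z ≠ w := by
    rcases eq_or_ne x w with rfl | h
    · exact ⟨y, fun e => hxy e.symm⟩
    · exact ⟨x, h⟩
  rcases (hsc w z).cases_head with h | ⟨c, hc, -⟩
  · exact absurd h.symm hz
  · calc (0:ℝ) < ω w c := hc
      _ ≤ deg ω w := Finset.single_le_sum (fun i _ => hnn w i) (Finset.mem_univ c)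

private lemma sum_trans_one {V : Type*} [Fintype V] [DecidableEq V]
    (ω : V → V → ℝ) {w : V} (hd : 0 < deg ω w) : ∑ z, ω w z / deg ω w = 1 := by
  rw [← Finset.sum_div]
  exact div_self hd.ne'

private lemma H_nonneg' {V : Type*} [Fintype V] [DecidableEq V]
    (ω : V → V → ℝ) (hnn : ∀ u v, 0 ≤ ω u v) (hd : ∀ w, 0 < deg ω w)
    (H : V → V → ℝ) (v : V) (hH0 : H v v = 0)
    (hHrec : ∀ u, u ≠ v → H u v = 1 + ∑ w, (ω u w / deg ω u) * H w v)
    (w : V) : 0 ≤ H w v := by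
  obtain ⟨w₀, -, hmin⟩ :=
    Finset.exists_min_image Finset.univ (fun z => H z v) ⟨v, Finset.mem_univ v⟩
  have hm : ∀ z, H w₀ v ≤ H z v := fun z => hmin z (Finset.mem_univ z)
  refine le_trans ?_ (hm w)
  by_contra hneg
  push_neg at hneg
  have hw0v : w₀ ≠ v := by
    intro e; rw [e, hH0] at hneg; exact absurd hneg (lt_irrefl 0)
  have h1 : H w₀ v = 1 + ∑ z, (ω w₀ z / deg ω w₀) * H z v := hHrec w₀ hw0v
  have h2 : ∑ z, (ω w₀ z / deg ω w₀) * H w₀ v ≤ ∑ z, (ω w₀ z / deg ω w₀) * H z v :=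
    Finset.sum_le_sum fun z _ =>
      mul_le_mul_of_nonneg_left (hm z) (div_nonneg (hnn _ _) (hd w₀).le)
  have h3 : ∑ z, (ω w₀ z / deg ω w₀) * H w₀ v = H w₀ v := by
    rw [← Finset.sum_mul, sum_trans_one ω (hd w₀), one_mul]
  linarith

private lemma return_identity {V : Type*} [Fintype V] [DecidableEq V]
    (ω : V → V → ℝ)
    (π : V → ℝ) (hπsum : ∑ v, π v = 1)
    (hπstat : ∀ v, ∑ u, π u * trans ω u v = π v)
    (H : V → V → ℝ) (hH0 : ∀ v, H v v = 0)
    (hHrec : ∀ u v, u ≠ v → H u v = 1 + ∑ w, (ω u w / deg ω u) * H w v)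
    (v : V) :
    π v * (∑ w, (ω v w / deg ω v) * H w v) = 1 - π v := by
  set C := ∑ w, (ω v w / deg ω v) * H w v with hC
  set A := ∑ u, π u * H u v with hA
  have e0 : A = ∑ u ∈ Finset.univ.erase v, π u * H u v := by
    rw [hA, ← Finset.sum_erase_add _ _ (Finset.mem_univ v), hH0 v, mul_zero, add_zero]
  have e1 : ∑ u ∈ Finset.univ.erase v, π u * H u v
      = ∑ u ∈ Finset.univ.erase v, (π u + ∑ w, π u * ((ω u w / deg ω u) * H w v)) := by
    refine Finset.sum_congr rfl fun x hx => ?_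
    rw [hHrec x v (Finset.ne_of_mem_erase hx), mul_add, mul_one, Finset.mul_sum]
  have e2 : ∑ u ∈ Finset.univ.erase v, π u = 1 - π v := by
    rw [Finset.sum_erase_eq_sub (Finset.mem_univ v), hπsum]
  have e3 : ∑ u ∈ Finset.univ.erase v, ∑ w, π u * ((ω u w / deg ω u) * H w v)
      = (∑ u, ∑ w, π u * ((ω u w / deg ω u) * H w v)) - π v * C := by
    rw [Finset.sum_erase_eq_sub (Finset.mem_univ v), hC, Finset.mul_sum]
  have e4 : ∑ u, ∑ w, π u * ((ω u w / deg ω u) * H w v) = A := by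
    rw [Finset.sum_comm, hA]
    refine Finset.sum_congr rfl fun w _ => ?_
    have : ∑ u, π u * ((ω u w / deg ω u) * H w v)
        = (∑ u, π u * (ω u w / deg ω u)) * H w v := by
      rw [Finset.sum_mul]; exact Finset.sum_congr rfl fun u _ => by ring
    rw [this]
    have hs : ∑ u, π u * (ω u w / deg ω u) = π w := by
      have := hπstat w
      simpa [trans] using this
    rw [hs]
  have e5 : A = (1 - π v) + ((∑ u, ∑ w, π u * ((ω u w / deg ω u) * H w v)) - π v * C) := by
    rw [e0, e1, Finset.sum_add_distrib, e2, e3]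
  linarith [e4, e5]

/-- **Upper bounds for the hitting time of a strongly-connected digraph.**
Part (a): if `(v,u)` is an edge then `H(u,v) ≤ (d_v/ω(v,u))·(π_v⁻¹ - 1)`.
Part (b): if `R` is the set of vertices reachable from `u` by a directed path
avoiding `v`, and every `b ∈ R` has an edge to `v` (otherwise the bound is `+∞`
and there is nothing to prove), then `H(u,v) ≤ max_{b ∈ R} d_b/ω(b,v)`. -/
theorem hitting_time_upper_bounds_digraph
    {V : Type*} [Fintype V] [DecidableEq V]
    (ω : V → V → ℝ) (hnn : ∀ u v, 0 ≤ ω u v) (hloop : ∀ v, ω v v = 0)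
    (hsc : StronglyConnected ω)
    (π : V → ℝ) (hπpos : ∀ v, 0 < π v) (hπsum : ∑ v, π v = 1)
    (hπstat : ∀ v, ∑ u, π u * trans ω u v = π v)
    (H : V → V → ℝ) (hH0 : ∀ v, H v v = 0)
    (hHrec : ∀ u v, u ≠ v → H u v = 1 + ∑ w, (ω u w / deg ω u) * H w v)
    (u v : V) :
    (0 < ω v u → H u v ≤ (deg ω v / ω v u) * ((π v)⁻¹ - 1)) ∧
      (u ≠ v →
        (∀ b : V, Relation.ReflTransGen (fun a c => 0 < ω a c ∧ c ≠ v) u b → 0 < ω b v) →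
        H u v ≤ sSup ((fun b => deg ω b / ω b v) ''
          {b : V | Relation.ReflTransGen (fun a c => 0 < ω a c ∧ c ≠ v) u b})) := by
  constructor
  · -- part (a)
    intro hvu
    have huv : u ≠ v := by
      intro e; rw [e, hloop] at hvu; exact absurd hvu (lt_irrefl 0)
    have hdeg : ∀ w, 0 < deg ω w := deg_pos' ω hnn hsc huv
    have hHnn : ∀ w, 0 ≤ H w v :=
      H_nonneg' ω hnn hdeg H v (hH0 v) (fun x hx => hHrec x v hx)
    have hret := return_identity ω π hπsum hπstat H hH0 hHrec v
    have hπv := hπpos v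
    have hCval : ∑ w, (ω v w / deg ω v) * H w v = (π v)⁻¹ - 1 := by
      have h0 : ∑ w, (ω v w / deg ω v) * H w v = (1 - π v) / π v := by
        rw [eq_div_iff hπv.ne', mul_comm]; exact hret
      rw [h0, sub_div, div_self hπv.ne', one_div]
    have hterm : (ω v u / deg ω v) * H u v ≤ ∑ w, (ω v w / deg ω v) * H w v :=
      Finset.single_le_sum (f := fun w => (ω v w / deg ω v) * H w v)
        (fun w _ => mul_nonneg (div_nonneg (hnn _ _) (hdeg v).le) (hHnn w))
        (Finset.mem_univ u)
    have h1 : (ω v u / deg ω v) * H u v ≤ (π v)⁻¹ - 1 := by rw [← hCval]; exact hterm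
    have hdv := hdeg v
    have h2 : ω v u * H u v ≤ deg ω v * ((π v)⁻¹ - 1) := by
      have h3 := mul_le_mul_of_nonneg_left h1 hdv.le
      calc ω v u * H u v = deg ω v * ((ω v u / deg ω v) * H u v) := by
            field_simp
        _ ≤ deg ω v * ((π v)⁻¹ - 1) := h3
    rw [div_mul_eq_mul_div, le_div_iff₀ hvu, mul_comm]
    exact h2
  · -- part (b)
    intro huv hall
    have hdeg : ∀ w, 0 < deg ω w := deg_pos' ω hnn hsc huv
    have hHnn : ∀ w, 0 ≤ H w v :=
      H_nonneg' ω hnn hdeg H v (hH0 v) (fun x hx => hHrec x v hx)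
    set Rel := fun a c => 0 < ω a c ∧ c ≠ v with hRel
    have hRne : ∀ b, Relation.ReflTransGen Rel u b → b ≠ v := by
      intro b h
      rcases Relation.ReflTransGen.cases_tail h with rfl | ⟨c, -, hcb⟩
      · exact huv
      · exact hcb.2
    set Rf : Finset V := Finset.univ.filter (fun b => Relation.ReflTransGen Rel u b)
      with hRf
    have hune : u ∈ Rf := by
      rw [hRf, Finset.mem_filter]
      exact ⟨Finset.mem_univ u, Relation.ReflTransGen.refl⟩
    obtain ⟨b₀, hb₀, hmax⟩ := Finset.exists_max_image Rf (fun b => H b v) ⟨u, hune⟩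
    have hb₀R : Relation.ReflTransGen Rel u b₀ := (Finset.mem_filter.mp hb₀).2
    have hb₀v : b₀ ≠ v := hRne _ hb₀R
    have hp : 0 < ω b₀ v := hall b₀ hb₀R
    have hterm : ∀ w : V, (ω b₀ w / deg ω b₀) * H w v
        ≤ (ω b₀ w / deg ω b₀) * (if w = v then 0 else H b₀ v) := by
      intro w
      by_cases hwv : w = v
      · simp [hwv, hH0]
      · rw [if_neg hwv]
        rcases eq_or_lt_of_le (hnn b₀ w) with h0 | h0
        · rw [← h0]; simp
        · have hwR : w ∈ Rf := by
            rw [hRf, Finset.mem_filter]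
            exact ⟨Finset.mem_univ w, hb₀R.tail ⟨h0, hwv⟩⟩
          exact mul_le_mul_of_nonneg_left (hmax w hwR)
            (div_nonneg (hnn _ _) (hdeg b₀).le)
    have hsum : ∑ w, (ω b₀ w / deg ω b₀) * (if w = v then 0 else H b₀ v)
        = (1 - ω b₀ v / deg ω b₀) * H b₀ v := by
      rw [← Finset.sum_erase_add _ _ (Finset.mem_univ v), if_pos rfl, mul_zero, add_zero]
      have : ∀ w ∈ Finset.univ.erase v, (ω b₀ w / deg ω b₀) * (if w = v then 0 else H b₀ v)
          = (ω b₀ w / deg ω b₀) * H b₀ v := by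
        intro w hw; rw [if_neg (Finset.ne_of_mem_erase hw)]
      rw [Finset.sum_congr rfl this, ← Finset.sum_mul,
        Finset.sum_erase_eq_sub (Finset.mem_univ v), sum_trans_one ω (hdeg b₀)]
    have hrec := hHrec b₀ v hb₀v
    have hsumle : ∑ w, (ω b₀ w / deg ω b₀) * H w v
        ≤ (1 - ω b₀ v / deg ω b₀) * H b₀ v := by
      rw [← hsum]
      exact Finset.sum_le_sum fun w _ => hterm w
    have h4 : H b₀ v ≤ 1 + (1 - ω b₀ v / deg ω b₀) * H b₀ v := by
      linarith [hrec, hsumle]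
    have h5 : (ω b₀ v / deg ω b₀) * H b₀ v ≤ 1 := by nlinarith
    have h6 : H b₀ v ≤ deg ω b₀ / ω b₀ v := by
      rw [le_div_iff₀ hp]
      have hdb := hdeg b₀
      calc H b₀ v * ω b₀ v = deg ω b₀ * ((ω b₀ v / deg ω b₀) * H b₀ v) := by
            field_simp
        _ ≤ deg ω b₀ * 1 := mul_le_mul_of_nonneg_left h5 hdb.le
        _ = deg ω b₀ := mul_one _
    calc H u v ≤ H b₀ v := hmax u hune
      _ ≤ deg ω b₀ / ω b₀ v := h6
      _ ≤ sSup ((fun b => deg ω b / ω b v) ''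
          {b : V | Relation.ReflTransGen Rel u b}) :=
        le_csSup (Set.Finite.bddAbove (Set.toFinite _)) ⟨b₀, hb₀R, rfl⟩

end Paper
end
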